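/- arXiv:2001.10332 — 2 statements merged into one kernel-verified Lean document; each statement's English description precedes it below -/
import Mathlib

section
/- Let 0 < s < 1/2 and let A ⊆ ℝ^d be a bounded measurable set. Then the Gagliardo seminorm squared [1_A]_{H^s}^2 = ∫∫ |1_A(x)-1_A(y)|²/|x-y|^{d+2s} dx dy satisfies [1_A]_{H^s}^2 ≤ C(d,s)·|A|^{1-2s}, provided the measure m(τ) := μ{(x,y) : x∈A, y∉A, |x-y|<τ} satisfies m(τ) ≤ C·τ^{d+1} for all τ>0 (which holds when ∂A is C²). -/
open MeasureTheory Set Metric Module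

/-!
The integrand `f = |1_A x - 1_A y|² / |x - y| ^ (n + 2s)` exceeds `t` only on pairs of points
on opposite sides of `∂A` at distance less than `τ = t ^ (-1 / (n + 2s))`. By the layer-cake
formula the seminorm is `∫₀^∞ μ{f > t} dt`, and `μ{f > t} ≤ 2 min (C τ ^ (n + 1), |A| |B₁| τ ^ n)`:
the tube hypothesis controls large `t`, the trivial bound small `t`. Since `s < 1/2` the first
bound is integrable at infinity and since `s > 0` the second is integrable at zero; splitting
where they cross yields `|A| ^ (1 - 2s)`.
-/

lemma setLIntegral_Ioc_ofReal_rpow {r T : ℝ} (hr : -1 < r) (hT : 0 < T) :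
    ∫⁻ t in Ioc 0 T, ENNReal.ofReal (t ^ r) = ENNReal.ofReal (T ^ (r + 1) / (r + 1)) := by
  have hnn : 0 ≤ᵐ[volume.restrict (Ioc 0 T)] fun t : ℝ => t ^ r := by
    filter_upwards [ae_restrict_mem measurableSet_Ioc] with t ht
    exact Real.rpow_nonneg ht.1.le r
  rw [← ofReal_integral_eq_lintegral_ofReal (intervalIntegral.intervalIntegrable_rpow' hr).1 hnn,
    ← intervalIntegral.integral_of_le hT.le, integral_rpow (Or.inl hr),
    Real.zero_rpow (by linarith), sub_zero]

lemma setLIntegral_Ioi_ofReal_rpow {r T : ℝ} (hr : r < -1) (hT : 0 < T) :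
    ∫⁻ t in Ioi T, ENNReal.ofReal (t ^ r) = ENNReal.ofReal (-T ^ (r + 1) / (r + 1)) := by
  have hnn : 0 ≤ᵐ[volume.restrict (Ioi T)] fun t : ℝ => t ^ r := by
    filter_upwards [ae_restrict_mem measurableSet_Ioi] with t ht
    exact Real.rpow_nonneg (hT.trans ht).le r
  rw [← ofReal_integral_eq_lintegral_ofReal (integrableOn_Ioi_rpow_of_lt hr hT) hnn,
    integral_Ioi_rpow_of_lt hr hT]

/-- Splitting at an arbitrary point `T`, each power is integrable on the side where it is used. -/
lemma setLIntegral_Ioi_min_rpow_le {β γ a b T : ℝ} (hβ : β < 1) (hγ : 1 < γ) (ha : 0 ≤ a)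
    (hb : 0 ≤ b) (hT : 0 < T) :
    ∫⁻ t in Ioi 0, min (ENNReal.ofReal (b * t ^ (-γ))) (ENNReal.ofReal (a * t ^ (-β)))
      ≤ ENNReal.ofReal (a * T ^ (1 - β) / (1 - β) + b * T ^ (1 - γ) / (γ - 1)) := by
  have hT₁ : 0 ≤ T ^ (1 - β) := Real.rpow_nonneg hT.le _
  have hT₂ : 0 ≤ T ^ (1 - γ) := Real.rpow_nonneg hT.le _
  rw [← Ioc_union_Ioi_eq_Ioi hT.le, lintegral_union measurableSet_Ioi (Ioc_disjoint_Ioi le_rfl),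
    ENNReal.ofReal_add (div_nonneg (mul_nonneg ha hT₁) (by linarith))
      (div_nonneg (mul_nonneg hb hT₂) (by linarith))]
  gcongr
  · calc _ ≤ ∫⁻ t in Ioc 0 T, ENNReal.ofReal a * ENNReal.ofReal (t ^ (-β)) :=
          lintegral_mono fun t => (min_le_right _ _).trans_eq (ENNReal.ofReal_mul ha)
      _ = _ := by
          rw [lintegral_const_mul' _ _ ENNReal.ofReal_ne_top,
            setLIntegral_Ioc_ofReal_rpow (by linarith) hT, ← ENNReal.ofReal_mul ha, neg_add_eq_sub,
            mul_div_assoc]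
  · calc _ ≤ ∫⁻ t in Ioi T, ENNReal.ofReal b * ENNReal.ofReal (t ^ (-γ)) :=
          lintegral_mono fun t => (min_le_left _ _).trans_eq (ENNReal.ofReal_mul hb)
      _ = _ := by
          rw [lintegral_const_mul' _ _ ENNReal.ofReal_ne_top,
            setLIntegral_Ioi_ofReal_rpow (by linarith) hT, ← ENNReal.ofReal_mul hb, neg_add_eq_sub,
            neg_div, ← div_neg, neg_sub, mul_div_assoc]

lemma mul_div_rpow_eq {a b : ℝ} (ha : 0 < a) (hb : 0 ≤ b) (e : ℝ) :
    a * (b / a) ^ e = a ^ (1 - e) * b ^ e := by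
  rw [Real.div_rpow hb ha.le, Real.rpow_sub ha, Real.rpow_one]
  field_simp

/-- The optimal split point is where the two powers cross, `t = (b / a) ^ (γ - β)⁻¹`. -/
lemma setLIntegral_Ioi_min_rpow_le_of_pos {β γ a b : ℝ} (hβ : β < 1) (hγ : 1 < γ) (ha : 0 < a)
    (hb : 0 < b) :
    ∫⁻ t in Ioi 0, min (ENNReal.ofReal (b * t ^ (-γ))) (ENNReal.ofReal (a * t ^ (-β)))
      ≤ ENNReal.ofReal ((1 / (1 - β) + 1 / (γ - 1)) *
          (a ^ ((γ - 1) / (γ - β)) * b ^ ((1 - β) / (γ - β)))) := by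
  have hγβ : γ - β ≠ 0 := by linarith
  set T := (b / a) ^ (γ - β)⁻¹
  have hT : 0 < T := Real.rpow_pos_of_pos (div_pos hb ha) _
  have h₁ : a * T ^ (1 - β) = a ^ ((γ - 1) / (γ - β)) * b ^ ((1 - β) / (γ - β)) := by
    rw [← Real.rpow_mul (div_pos hb ha).le, mul_div_rpow_eq ha hb.le]
    congr 2
    · field_simp
      ring
    · field_simp
  have h₂ : b * T ^ (1 - γ) = a ^ ((γ - 1) / (γ - β)) * b ^ ((1 - β) / (γ - β)) := by
    rw [← Real.rpow_mul (div_pos hb ha).le, ← inv_div, Real.inv_rpow (div_pos ha hb).le,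
      ← Real.rpow_neg (div_pos ha hb).le, mul_div_rpow_eq hb ha.le, mul_comm]
    congr 2 <;> field_simp <;> ring
  refine (setLIntegral_Ioi_min_rpow_le hβ hγ ha.le hb.le hT).trans_eq ?_
  rw [h₁, h₂]
  ring_nf

def crossingPairs {X : Type*} [PseudoMetricSpace X] (A : Set X) (r : ℝ) : Set (X × X) :=
  {p | p.1 ∈ A ∧ p.2 ∉ A ∧ dist p.1 p.2 < r}

noncomputable def gagliardoIntegrand {X : Type*} [PseudoMetricSpace X] (u : X → ℝ) (α : ℝ)
    (p : X × X) : ℝ :=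
  |u p.1 - u p.2| ^ 2 / dist p.1 p.2 ^ α

lemma gagliardoIntegrand_nonneg {X : Type*} [PseudoMetricSpace X] (u : X → ℝ) (α : ℝ)
    (p : X × X) : 0 ≤ gagliardoIntegrand u α p := by
  unfold gagliardoIntegrand
  positivity

lemma lt_rpow_neg_inv_of_lt_inv_rpow {r t α : ℝ} (hr : 0 ≤ r) (ht : 0 < t) (hα : 0 < α)
    (h : t < (r ^ α)⁻¹) : r < t ^ (-α⁻¹) := by
  have hpos : 0 < r ^ α := inv_pos.mp (ht.trans h)
  rw [Real.rpow_neg ht.le, ← Real.inv_rpow ht.le,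
    Real.lt_rpow_inv_iff_of_pos hr (inv_nonneg.mpr ht.le) hα]
  exact (lt_inv_comm₀ ht hpos).mp h

lemma rpow_neg_inv_rpow {t : ℝ} (ht : 0 ≤ t) (α x : ℝ) :
    (t ^ (-α⁻¹)) ^ x = t ^ (-(x / α)) := by
  rw [← Real.rpow_mul ht]
  ring_nf

section MetricSpace

variable {X : Type*} [PseudoMetricSpace X]

lemma setOf_lt_gagliardoIntegrand_indicator_subset (A : Set X) {α t : ℝ} (hα : 0 < α)
    (ht : 0 < t) :
    {p | t < gagliardoIntegrand (A.indicator fun _ => 1) α p}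
      ⊆ crossingPairs A (t ^ (-α⁻¹)) ∪ Prod.swap ⁻¹' crossingPairs A (t ^ (-α⁻¹)) := by
  rintro ⟨x, y⟩ hp
  have hdist : t < (dist x y ^ α)⁻¹ → dist x y < t ^ (-α⁻¹) :=
    lt_rpow_neg_inv_of_lt_inv_rpow dist_nonneg ht hα
  by_cases hx : x ∈ A <;> by_cases hy : y ∈ A <;>
    simp_all [gagliardoIntegrand, crossingPairs, dist_comm, not_lt_of_gt ht]

variable [MeasurableSpace X]

lemma prod_measure_setOf_lt_gagliardoIntegrand_indicator_le (μ : Measure X) [SFinite μ]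
    (A : Set X) {α t : ℝ} (hα : 0 < α) (ht : 0 < t) :
    μ.prod μ {p | t < gagliardoIntegrand (A.indicator fun _ => 1) α p}
      ≤ 2 * μ.prod μ (crossingPairs A (t ^ (-α⁻¹))) := by
  calc _ ≤ μ.prod μ (crossingPairs A (t ^ (-α⁻¹)) ∪ Prod.swap ⁻¹' crossingPairs A (t ^ (-α⁻¹))) :=
        measure_mono (setOf_lt_gagliardoIntegrand_indicator_subset A hα ht)
    _ ≤ _ := measure_union_le _ _
    _ = _ := by
        rw [two_mul]
        congr 1
        exact Measure.measurePreserving_swap.measure_preimage_equiv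
          (f := MeasurableEquiv.prodComm) _

variable [OpensMeasurableSpace X] [SecondCountableTopology X]

lemma measurable_gagliardoIntegrand {u : X → ℝ} (hu : Measurable u) (α : ℝ) :
    Measurable (gagliardoIntegrand u α) :=
  (((hu.comp measurable_fst).sub (hu.comp measurable_snd)).abs.pow_const 2).div
    (measurable_dist.pow_const α)

end MetricSpace

section NormedSpace

variable {E : Type*} [NormedAddCommGroup E] [NormedSpace ℝ E] [FiniteDimensional ℝ E]
  [MeasurableSpace E] [BorelSpace E] (μ : Measure E) [μ.IsAddHaarMeasure]

lemma prod_measure_setOf_fst_mem_dist_lt {A : Set E} (hA : MeasurableSet A) (r : ℝ) :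
    μ.prod μ {p | p.1 ∈ A ∧ dist p.1 p.2 < r} = μ A * μ (ball 0 r) := by
  have hmeas : MeasurableSet {p : E × E | p.1 ∈ A ∧ dist p.1 p.2 < r} :=
    (measurable_fst hA).inter (measurableSet_lt measurable_dist measurable_const)
  rw [Measure.prod_apply hmeas]
  have hslice : ∀ x, μ (Prod.mk x ⁻¹' {p | p.1 ∈ A ∧ dist p.1 p.2 < r})
      = A.indicator (fun _ => μ (ball 0 r)) x := by
    intro x
    by_cases hx : x ∈ A
    · have hball : Prod.mk x ⁻¹' {p : E × E | p.1 ∈ A ∧ dist p.1 p.2 < r} = ball x r := by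
        ext y
        simp [hx, dist_comm]
      rw [hball, indicator_of_mem hx, Measure.addHaar_ball_center]
    · simp [hx]
  simp_rw [hslice]
  rw [lintegral_indicator_const hA, mul_comm]

lemma prod_measure_crossingPairs_le {A : Set E} (hA : MeasurableSet A) {r : ℝ} (hr : 0 < r) :
    μ.prod μ (crossingPairs A r) ≤ μ A * μ (ball 0 1) * ENNReal.ofReal (r ^ finrank ℝ E) := by
  calc _ ≤ μ.prod μ {p | p.1 ∈ A ∧ dist p.1 p.2 < r} := measure_mono fun p hp => ⟨hp.1, hp.2.2⟩
    _ = _ := by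
        rw [prod_measure_setOf_fst_mem_dist_lt μ hA, Measure.addHaar_ball_of_pos μ 0 hr, mul_comm
          (ENNReal.ofReal _), mul_assoc]

theorem exists_lintegral_gagliardoIntegrand_indicator_le {s C : ℝ} (hs0 : 0 < s) (hs : s < 1 / 2)
    (hC : 0 < C) :
    ∃ C' > 0, ∀ A : Set E, MeasurableSet A → 0 < μ A → μ A < ⊤ →
      (∀ τ > 0, μ.prod μ (crossingPairs A τ) ≤ ENNReal.ofReal (C * τ ^ ((finrank ℝ E : ℝ) + 1))) →
      ∫⁻ x, ∫⁻ y, ENNReal.ofReal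
          (gagliardoIntegrand (A.indicator fun _ => 1) (finrank ℝ E + 2 * s) (x, y)) ∂μ ∂μ
        ≤ ENNReal.ofReal (C' * (μ A).toReal ^ (1 - 2 * s)) := by
  set n : ℝ := (finrank ℝ E : ℝ)
  set α := n + 2 * s
  have hα : 0 < α := by positivity
  set β := n / α
  set γ := (n + 1) / α
  have h1β : 1 - β = 2 * s / α := by
    rw [eq_div_iff hα.ne', sub_mul, div_mul_cancel₀ _ hα.ne']; simp only [α]; ring
  have hγ1 : γ - 1 = (1 - 2 * s) / α := by
    rw [eq_div_iff hα.ne', sub_mul, div_mul_cancel₀ _ hα.ne']; simp only [α]; ring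
  have hγβ : γ - β = 1 / α := by rw [← sub_div, add_sub_cancel_left]
  have hβ : β < 1 := sub_pos.mp (h1β ▸ by positivity)
  have hγ : 1 < γ := sub_pos.mp (hγ1 ▸ div_pos (by linarith) hα)
  set κ := (μ (ball 0 1)).toReal
  have hκ : 0 < κ := ENNReal.toReal_pos (measure_ball_pos μ 0 one_pos).ne' measure_ball_lt_top.ne
  set K := 1 / (1 - β) + 1 / (γ - 1)
  have hK : 0 < K := add_pos (one_div_pos.mpr (by linarith)) (one_div_pos.mpr (by linarith))
  refine ⟨2 * K * (κ ^ (1 - 2 * s) * C ^ (2 * s)), by positivity, ?_⟩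
  intro A hA hA0 hAtop hm
  set v := (μ A).toReal
  have hv : 0 < v := ENNReal.toReal_pos hA0.ne' hAtop.ne
  set f := gagliardoIntegrand (A.indicator fun _ => (1 : ℝ)) α
  have hf : Measurable f := measurable_gagliardoIntegrand (measurable_const.indicator hA) α
  have hlevel : ∀ t ∈ Ioi (0 : ℝ), μ.prod μ {p | t < f p}
      ≤ 2 * min (ENNReal.ofReal (C * t ^ (-γ))) (ENNReal.ofReal (v * κ * t ^ (-β))) := by
    intro t ht
    have hτ : 0 < t ^ (-α⁻¹) := Real.rpow_pos_of_pos ht _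
    refine (prod_measure_setOf_lt_gagliardoIntegrand_indicator_le μ A hα ht).trans ?_
    gcongr
    refine le_min ?_ ?_
    · simpa only [rpow_neg_inv_rpow (le_of_lt ht)] using hm _ hτ
    · refine (prod_measure_crossingPairs_le μ hA hτ).trans_eq ?_
      rw [← Real.rpow_natCast, rpow_neg_inv_rpow (le_of_lt ht), ENNReal.ofReal_mul
        (mul_nonneg hv.le hκ.le), ENNReal.ofReal_mul hv.le, ENNReal.ofReal_toReal hAtop.ne,
        ENNReal.ofReal_toReal measure_ball_lt_top.ne]
  have hexp₁ : (γ - 1) / (γ - β) = 1 - 2 * s := by rw [hγ1, hγβ]; field_simp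
  have hexp₂ : (1 - β) / (γ - β) = 2 * s := by rw [h1β, hγβ]; field_simp
  calc ∫⁻ x, ∫⁻ y, ENNReal.ofReal (f (x, y)) ∂μ ∂μ
      = ∫⁻ p, ENNReal.ofReal (f p) ∂μ.prod μ := lintegral_lintegral (by fun_prop)
    _ = ∫⁻ t in Ioi 0, μ.prod μ {p | t < f p} :=
        lintegral_eq_lintegral_meas_lt _ (.of_forall (gagliardoIntegrand_nonneg _ _))
          hf.aemeasurable
    _ ≤ ∫⁻ t in Ioi 0, 2 * min (ENNReal.ofReal (C * t ^ (-γ)))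
          (ENNReal.ofReal (v * κ * t ^ (-β))) := setLIntegral_mono' measurableSet_Ioi hlevel
    _ ≤ 2 * ENNReal.ofReal (K * ((v * κ) ^ (1 - 2 * s) * C ^ (2 * s))) := by
        rw [lintegral_const_mul' _ _ ENNReal.ofNat_ne_top, ← hexp₁, ← hexp₂]
        gcongr
        exact setLIntegral_Ioi_min_rpow_le_of_pos hβ hγ (mul_pos hv hκ) hC
    _ = ENNReal.ofReal (2 * K * (κ ^ (1 - 2 * s) * C ^ (2 * s)) * v ^ (1 - 2 * s)) := by
        rw [← ENNReal.ofReal_ofNat 2, ← ENNReal.ofReal_mul zero_le_two,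
          Real.mul_rpow hv.le hκ.le]
        ring_nf

end NormedSpace

theorem stmt1_general (d : ℕ) (s C : ℝ) (hs0 : 0 < s) (hs : s < 1/2) (hC : 0 < C) :
    ∃ C' > 0, ∀ A : Set (EuclideanSpace ℝ (Fin d)),
      MeasurableSet A → Bornology.IsBounded A →
      0 < volume A → volume A < ⊤ →
      (∀ τ > 0,
        (volume : Measure (EuclideanSpace ℝ (Fin d) × EuclideanSpace ℝ (Fin d)))
          {p | p.1 ∈ A ∧ p.2 ∉ A ∧ dist p.1 p.2 < τ} ≤ ENNReal.ofReal (C * τ ^ ((d : ℝ) + 1))) →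
      (∫⁻ x, ∫⁻ y, ENNReal.ofReal
          (|Set.indicator A (fun _ => (1:ℝ)) x - Set.indicator A (fun _ => (1:ℝ)) y| ^ 2
            / dist x y ^ ((d : ℝ) + 2 * s)))
        ≤ ENNReal.ofReal (C' * (volume A).toReal ^ (1 - 2 * s)) := by
  obtain ⟨C', hC', hbound⟩ := exists_lintegral_gagliardoIntegrand_indicator_le
    (volume : Measure (EuclideanSpace ℝ (Fin d))) hs0 hs hC
  rw [finrank_euclideanSpace_fin] at hbound
  exact ⟨C', hC', fun A hA _ hA0 hAtop hm => hbound A hA hA0 hAtop hm⟩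

theorem stmt1 (d : ℕ) (hd : 1 ≤ d) (s C : ℝ) (hs0 : 0 < s) (hs : s < 1/2) (hC : 0 < C) :
    ∃ C' > 0, ∀ A : Set (EuclideanSpace ℝ (Fin d)),
      MeasurableSet A → Bornology.IsBounded A →
      0 < volume A → volume A < ⊤ →
      (∀ τ > 0,
        (volume : Measure (EuclideanSpace ℝ (Fin d) × EuclideanSpace ℝ (Fin d)))
          {p | p.1 ∈ A ∧ p.2 ∉ A ∧ dist p.1 p.2 < τ} ≤ ENNReal.ofReal (C * τ ^ ((d : ℝ) + 1))) →
      (∫⁻ x, ∫⁻ y, ENNReal.ofReal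
          (|Set.indicator A (fun _ => (1:ℝ)) x - Set.indicator A (fun _ => (1:ℝ)) y| ^ 2
            / dist x y ^ ((d : ℝ) + 2 * s)))
        ≤ ENNReal.ofReal (C' * (volume A).toReal ^ (1 - 2 * s)) :=
  stmt1_general d s C hs0 hs hC
end

section
/- For α ∈ (0,1) and τ > 0, define the improper integral J(τ) = ∫_{-σ₀}^{σ₀} (σ² + τ²)^{-(1+α)/2} dσ for fixed σ₀ > 0. Then J(τ) = C_α τ^{-α} − 2/(α σ₀^α) + O(τ²) as τ → 0⁺, where C_α = ∫_ℝ (σ²+1)^{-(1+α)/2} dσ is finite. -/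
/-!
Substituting `σ = τ s` gives `∫_ℝ (σ² + τ²)^(-(1+α)/2) dσ = C_α τ^(-α)`, and since the integrand is
even, `J(τ)` falls short of this by twice its integral over `(σ₀, ∞)`. On that tail the integrand
is `σ^(-(1+α))`, whose integral is `1/(α σ₀^α)`, up to an error of at most
`(1+α)/2 · τ² σ^(-(3+α))` (tangent line of the convex function `x ↦ x^(-p)` at `x = σ²`); this error
integrates to `O(τ²)`.
-/

open MeasureTheory Set Real

lemma rpow_neg_sub_rpow_neg_add_le {x h p : ℝ} (hx : 0 < x) (hh : 0 ≤ h) (hp : 0 ≤ p) :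
    x ^ (-p) - (x + h) ^ (-p) ≤ p * h * x ^ (-p - 1) := by
  have hu : 0 < 1 + h / x := by positivity
  -- `(1 + u) ^ (-p) = exp (-p log (1 + u)) ≥ 1 - p log (1 + u) ≥ 1 - p u`
  have bernoulli : 1 - p * (h / x) ≤ (1 + h / x) ^ (-p) := by
    rw [rpow_def_of_pos hu]
    have hlog : log (1 + h / x) ≤ h / x := by linarith [log_le_sub_one_of_pos hu]
    nlinarith [add_one_le_exp (log (1 + h / x) * -p)]
  have hsplit : (x + h) ^ (-p) = x ^ (-p) * (1 + h / x) ^ (-p) := by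
    rw [← mul_rpow hx.le hu.le]
    congr 1
    field_simp
  rw [hsplit, rpow_sub_one hx.ne']
  have hxp : 0 < x ^ (-p) := rpow_pos_of_pos hx _
  calc x ^ (-p) - x ^ (-p) * (1 + h / x) ^ (-p)
      ≤ x ^ (-p) - x ^ (-p) * (1 - p * (h / x)) := by gcongr
    _ = p * h * (x ^ (-p) / x) := by ring

lemma abs_rpow_neg_sub_rpow_neg_add_le {x h p : ℝ} (hx : 0 < x) (hh : 0 ≤ h) (hp : 0 ≤ p) :
    |x ^ (-p) - (x + h) ^ (-p)| ≤ p * h * x ^ (-p - 1) := by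
  have hmono : (x + h) ^ (-p) ≤ x ^ (-p) :=
    rpow_le_rpow_of_nonpos hx (by linarith) (by linarith)
  rw [abs_of_nonneg (by linarith)]
  exact rpow_neg_sub_rpow_neg_add_le hx hh hp

lemma abs_rpow_sub_rpow_sq_add_sq_le {α σ : ℝ} (hα : -1 ≤ α) (hσ : 0 < σ) (τ : ℝ) :
    |σ ^ (-(1 + α)) - (σ ^ 2 + τ ^ 2) ^ (-(1 + α) / 2)|
      ≤ (1 + α) / 2 * τ ^ 2 * σ ^ (-(3 + α)) := by
  have h := abs_rpow_neg_sub_rpow_neg_add_le (pow_pos hσ 2) (sq_nonneg τ)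
    (p := (1 + α) / 2) (by linarith)
  rw [← rpow_natCast_mul hσ.le, ← rpow_natCast_mul hσ.le, Nat.cast_ofNat,
    show 2 * -((1 + α) / 2) = -(1 + α) by ring,
    show 2 * (-((1 + α) / 2) - 1) = -(3 + α) by ring] at h
  rwa [neg_div]

lemma integrable_rpow_sq_add_sq {α τ : ℝ} (hα : 0 < α) (hτ : τ ≠ 0) :
    Integrable fun σ : ℝ ↦ (σ ^ 2 + τ ^ 2) ^ (-(1 + α) / 2) := by
  have h : Integrable fun σ : ℝ ↦ ((1 : ℝ) + ‖σ‖ ^ 2) ^ (-(1 + α) / 2) :=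
    integrable_rpow_neg_one_add_norm_sq (by simpa using hα)
  refine ((h.comp_div hτ).const_mul ((τ ^ 2) ^ (-(1 + α) / 2))).congr
    (Filter.Eventually.of_forall fun σ ↦ ?_)
  simp only [norm_eq_abs, sq_abs]
  rw [← mul_rpow (by positivity) (by positivity)]
  congr 1
  field_simp
  ring

lemma integral_rpow_sq_add_sq {τ : ℝ} (hτ : 0 < τ) (α : ℝ) :
    ∫ σ : ℝ, (σ ^ 2 + τ ^ 2) ^ (-(1 + α) / 2)
      = (∫ σ : ℝ, (σ ^ 2 + 1) ^ (-(1 + α) / 2)) * τ ^ (-α) := by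
  have hscale : ∀ σ : ℝ, (σ ^ 2 + τ ^ 2) ^ (-(1 + α) / 2)
      = τ ^ (-(1 + α)) * ((σ / τ) ^ 2 + 1) ^ (-(1 + α) / 2) := by
    intro σ
    have hτα : τ ^ (-(1 + α)) = (τ ^ 2) ^ (-(1 + α) / 2) := by
      rw [← rpow_natCast_mul hτ.le, Nat.cast_ofNat]
      ring_nf
    rw [hτα, ← mul_rpow (by positivity) (by positivity)]
    congr 1
    field_simp
  simp_rw [hscale]
  rw [integral_const_mul, Measure.integral_comp_div (fun y ↦ (y ^ 2 + 1) ^ (-(1 + α) / 2)),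
    abs_of_pos hτ, smul_eq_mul, ← mul_assoc,
    ← rpow_add_one hτ.ne', show -(1 + α) + 1 = -α by ring, mul_comm]

lemma integral_eq_intervalIntegral_add_two_mul_setIntegral_Ioi {f : ℝ → ℝ}
    (heven : ∀ x, f (-x) = f x) (hf : Integrable f) {a : ℝ} (ha : 0 ≤ a) :
    ∫ x, f x = (∫ x in -a..a, f x) + 2 * ∫ x in Ioi a, f x := by
  have hleft : ∫ x in Iic (-a), f x = ∫ x in Ioi a, f x := by
    simpa only [heven, neg_neg] using integral_comp_neg_Iic (-a) f
  have hright : ∫ x in Ioi (-a), f x = (∫ x in -a..a, f x) + ∫ x in Ioi a, f x := by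
    rw [intervalIntegral.integral_of_le (by linarith), ← setIntegral_union
      (Ioc_disjoint_Ioi le_rfl) measurableSet_Ioi hf.integrableOn hf.integrableOn,
      Ioc_union_Ioi_eq_Ioi (by linarith)]
  rw [← intervalIntegral.integral_Iic_add_Ioi hf.integrableOn hf.integrableOn, hleft, hright]
  ring

lemma integral_Ioi_rpow_neg_one_add {α : ℝ} (hα : 0 < α) {c : ℝ} (hc : 0 < c) :
    ∫ σ in Ioi c, σ ^ (-(1 + α)) = 1 / (α * c ^ α) := by
  rw [integral_Ioi_rpow_of_lt (by linarith) hc, show -(1 + α) + 1 = -α by ring,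
    rpow_neg hc.le]
  field_simp

lemma abs_integral_Ioi_rpow_sub_rpow_sq_add_sq_le {α c : ℝ} (hα : -1 ≤ α) (hc : 0 < c)
    (τ : ℝ) :
    |∫ σ in Ioi c, (σ ^ (-(1 + α)) - (σ ^ 2 + τ ^ 2) ^ (-(1 + α) / 2))|
      ≤ (1 + α) / (2 * (2 + α)) * c ^ (-(2 + α)) * τ ^ 2 := by
  calc |∫ σ in Ioi c, (σ ^ (-(1 + α)) - (σ ^ 2 + τ ^ 2) ^ (-(1 + α) / 2))|
      ≤ ∫ σ in Ioi c, (1 + α) / 2 * τ ^ 2 * σ ^ (-(3 + α)) := by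
        rw [← norm_eq_abs]
        exact norm_integral_le_of_norm_le
          ((integrableOn_Ioi_rpow_of_lt (a := -(3 + α)) (by linarith) hc).const_mul _)
          ((ae_restrict_iff' measurableSet_Ioi).2 <| ae_of_all _ fun σ hσ ↦
            abs_rpow_sub_rpow_sq_add_sq_le hα (hc.trans hσ) τ)
    _ = (1 + α) / (2 * (2 + α)) * c ^ (-(2 + α)) * τ ^ 2 := by
        rw [integral_const_mul, integral_Ioi_rpow_of_lt (by linarith) hc,
          show -(3 + α) + 1 = -(2 + α) by ring]
        field_simp

lemma intervalIntegral_rpow_sq_add_sq_sub_eq {α σ₀ τ : ℝ} (hα : 0 < α) (hσ₀ : 0 < σ₀)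
    (hτ : 0 < τ) :
    (∫ σ in (-σ₀)..σ₀, (σ ^ 2 + τ ^ 2) ^ (-(1 + α) / 2))
      - (∫ σ : ℝ, (σ ^ 2 + 1) ^ (-(1 + α) / 2)) * τ ^ (-α) + 2 / (α * σ₀ ^ α)
      = 2 * ∫ σ in Ioi σ₀, (σ ^ (-(1 + α)) - (σ ^ 2 + τ ^ 2) ^ (-(1 + α) / 2)) := by
  have hf := integrable_rpow_sq_add_sq hα hτ.ne'
  rw [← integral_rpow_sq_add_sq hτ, integral_eq_intervalIntegral_add_two_mul_setIntegral_Ioi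
      (fun σ ↦ by simp only [neg_sq]) hf hσ₀.le,
    integral_sub (integrableOn_Ioi_rpow_of_lt (by linarith) hσ₀) hf.integrableOn,
    integral_Ioi_rpow_neg_one_add hα hσ₀]
  ring

theorem stmt5_general (α σ₀ : ℝ) (hα : 0 < α) (hσ₀ : 0 < σ₀) :
    ∃ C > 0, ∃ τ₁ > 0, ∀ τ : ℝ, 0 < τ → τ < τ₁ →
      |(∫ σ in (-σ₀)..σ₀, ((σ ^ 2 + τ ^ 2) ^ (-(1 + α) / 2) : ℝ))
        - (∫ σ : ℝ, ((σ ^ 2 + 1) ^ (-(1 + α) / 2) : ℝ)) * τ ^ (-α)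
        + 2 / (α * σ₀ ^ α)| ≤ C * τ ^ 2 := by
  refine ⟨(1 + α) / (2 + α) * σ₀ ^ (-(2 + α)), by positivity, 1, one_pos, fun τ hτ _ ↦ ?_⟩
  rw [intervalIntegral_rpow_sq_add_sq_sub_eq hα hσ₀ hτ, abs_mul, abs_two]
  have htail := abs_integral_Ioi_rpow_sub_rpow_sq_add_sq_le (α := α) (by linarith) hσ₀ τ
  calc 2 * |∫ σ in Ioi σ₀, (σ ^ (-(1 + α)) - (σ ^ 2 + τ ^ 2) ^ (-(1 + α) / 2))|
      ≤ 2 * ((1 + α) / (2 * (2 + α)) * σ₀ ^ (-(2 + α)) * τ ^ 2) := by gcongr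
    _ = (1 + α) / (2 + α) * σ₀ ^ (-(2 + α)) * τ ^ 2 := by field_simp

theorem stmt5 (α σ₀ : ℝ) (hα : 0 < α) (hα1 : α < 1) (hσ₀ : 0 < σ₀) :
    ∃ C > 0, ∃ τ₁ > 0, ∀ τ : ℝ, 0 < τ → τ < τ₁ →
      |(∫ σ in (-σ₀)..σ₀, ((σ ^ 2 + τ ^ 2) ^ (-(1 + α) / 2) : ℝ))
        - (∫ σ : ℝ, ((σ ^ 2 + 1) ^ (-(1 + α) / 2) : ℝ)) * τ ^ (-α)
        + 2 / (α * σ₀ ^ α)| ≤ C * τ ^ 2 :=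
  stmt5_general α σ₀ hα hσ₀
end
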